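/- The only integer tuples (a, b_1, ..., b_k) with a ≥ 0, b_1 ≥ ... ≥ b_k ≥ 0, a^2 = Σ b_i^2 - 3, and b_1^2 + b_2^2 + b_3^2 - 3 ≤ a^2 ≤ (3/4)(b_1^2 + b_2^2 + b_3^2) are (listing nonzero entries): (0,1,1,1), (1,1,1,1,1), (1,2), (2,2,1,1,1), (3,2,2,2). -/

import Mathlib

/-!
With S = b₁² + b₂² + b₃² and T the sum of the remaining squares, the hypotheses read
a² = S + T - 3 and 4a² ≤ 3S, so 4T + S ≤ 12: this bounds b₁ and a by 3 and leaves a finite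
search over the first three entries. The tail is decreasing and bounded by b₃, so it vanishes
when b₃ = 0; and since the (j+1)-st term of a decreasing nonnegative sequence is at most
1/(j+1) of its sum, a tail with T ≤ 1 consists of T ones followed by zeros.
-/

open Finset

theorem Fin.succ_nsmul_le_sum_of_antitone {M : Type*} [AddCommMonoid M] [PartialOrder M]
    [IsOrderedAddMonoid M] {m : ℕ} {f : Fin m → M} (hf : Antitone f) (hf0 : 0 ≤ f) (j : Fin m) :
    ((j : ℕ) + 1) • f j ≤ ∑ i, f i :=
  calc ((j : ℕ) + 1) • f j = #(Iic j) • f j := by rw [Fin.card_Iic]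
    _ ≤ ∑ i ∈ Iic j, f i := card_nsmul_le_sum _ _ _ fun i hi => hf (mem_Iic.mp hi)
    _ ≤ ∑ i, f i := sum_le_univ_sum_of_nonneg fun i => hf0 i

theorem Int.eq_ite_of_antitone_of_sum_sq_le_one {m : ℕ} {c : Fin m → ℤ} (hc : Antitone c)
    (hc0 : ∀ j, 0 ≤ c j) (hT : ∑ j, c j ^ 2 ≤ 1) (j : Fin m) :
    c j = if (j : ℤ) < ∑ j, c j ^ 2 then 1 else 0 := by
  have hsq : Antitone fun j => c j ^ 2 := fun i j hij => pow_le_pow_left₀ (hc0 j) (hc hij) 2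
  have hj := Fin.succ_nsmul_le_sum_of_antitone hsq (fun i => sq_nonneg (c i)) j
  rw [nsmul_eq_mul, Nat.cast_add, Nat.cast_one] at hj
  have hcj := hc0 j
  rcases Nat.eq_zero_or_pos (j : ℕ) with hj0 | hjpos
  · have hle : ∑ i, c i ^ 2 ≤ m * c j ^ 2 := by
      simpa using sum_le_card_nsmul univ (fun i => c i ^ 2) (c j ^ 2)
        fun i _ => hsq (Fin.le_def.mpr (by omega))
    rw [hj0, Nat.cast_zero] at hj ⊢
    rcases (show c j = 0 ∨ 1 ≤ c j by omega) with h | h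
    · rw [h, if_neg (by simpa [h] using hle)]
    · rw [if_pos (by nlinarith)]
      nlinarith
  · have hj2 : (2 : ℤ) ≤ (j : ℕ) + 1 := by exact_mod_cast Nat.succ_le_succ hjpos
    have : c j = 0 := by nlinarith
    rw [if_neg (by omega), this]

theorem eq_of_sq_eq_sum_sq_add_sub_three {a x y z T : ℤ} (ha : 0 ≤ a) (hz : 0 ≤ z)
    (hzy : z ≤ y) (hyx : y ≤ x) (hT : 0 ≤ T) (hTz : z = 0 → T = 0)
    (hsq : a ^ 2 = x ^ 2 + y ^ 2 + z ^ 2 + T - 3) (hup : 4 * a ^ 2 ≤ 3 * (x ^ 2 + y ^ 2 + z ^ 2)) :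
    (a = 0 ∧ x = 1 ∧ y = 1 ∧ z = 1 ∧ T = 0) ∨ (a = 1 ∧ x = 1 ∧ y = 1 ∧ z = 1 ∧ T = 1) ∨
      (a = 1 ∧ x = 2 ∧ y = 0 ∧ z = 0 ∧ T = 0) ∨ (a = 2 ∧ x = 2 ∧ y = 1 ∧ z = 1 ∧ T = 1) ∨
      (a = 3 ∧ x = 2 ∧ y = 2 ∧ z = 2 ∧ T = 0) := by
  have hbound : 4 * T + (x ^ 2 + y ^ 2 + z ^ 2) ≤ 12 := by linarith
  have hx3 : x ≤ 3 := by nlinarith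
  have ha3 : a ≤ 3 := by nlinarith
  have hy0 : 0 ≤ y := by omega
  have hx0 : 0 ≤ x := by omega
  interval_cases x <;> interval_cases y <;> interval_cases z <;> interval_cases a <;> omega

theorem Fin.sum_univ_three_add {M : Type*} [AddCommMonoid M] {m : ℕ} (f : Fin (3 + m) → M) :
    ∑ i, f i =
      f ⟨0, by omega⟩ + f ⟨1, by omega⟩ + f ⟨2, by omega⟩ + ∑ j : Fin m, f (Fin.natAdd 3 j) := by
  rw [Fin.sum_univ_add, Fin.sum_univ_three]
  rfl

/-- Enumeration of integer tuples (a, b₁ ≥ ... ≥ b_k ≥ 0), a ≥ 0, with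
a² = Σ b_i² - 3 and b₁² + b₂² + b₃² - 3 ≤ a² ≤ (3/4)(b₁² + b₂² + b₃²). -/
theorem stmt7 (k : ℕ) (hk : 3 ≤ k) (a : ℤ) (b : Fin k → ℤ) (ha : 0 ≤ a)
    (hmono : ∀ i j : Fin k, i ≤ j → b j ≤ b i)
    (hnonneg : ∀ i, 0 ≤ b i)
    (hsq : a ^ 2 = (∑ i, (b i) ^ 2) - 3)
    (hup : 4 * a ^ 2 ≤ 3 * ((b ⟨0, by omega⟩) ^ 2 + (b ⟨1, by omega⟩) ^ 2 + (b ⟨2, by omega⟩) ^ 2)) :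
    ∃ p : ℤ × List ℤ,
      p ∈ [((0 : ℤ), [(1 : ℤ), 1, 1]), (1, [1, 1, 1, 1]), (1, [2]),
           (2, [2, 1, 1, 1]), (3, [2, 2, 2])] ∧
      a = p.1 ∧ ∀ i : Fin k, b i = p.2.getD i.val 0 := by
  obtain ⟨m, rfl⟩ : ∃ m, k = 3 + m := ⟨k - 3, by omega⟩
  set c : Fin m → ℤ := fun j => b (Fin.natAdd 3 j)
  have hc : Antitone c := fun i j hij => hmono _ _ ((Fin.natAdd_le_natAdd_iff 3).mpr hij)
  have hc0 : ∀ j, 0 ≤ c j := fun j => hnonneg _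
  have hcz : ∀ j, c j ≤ b ⟨2, by omega⟩ :=
    fun j => hmono _ _ (Fin.le_def.mpr (by simp only [Fin.val_natAdd]; omega))
  rw [Fin.sum_univ_three_add (fun i => b i ^ 2)] at hsq
  obtain h | h | h | h | h := eq_of_sq_eq_sum_sq_add_sub_three ha (hnonneg _)
    (hmono _ _ (by simp)) (hmono _ _ (by simp)) (sum_nonneg fun j _ => sq_nonneg (c j))
    (fun hz => sum_eq_zero fun j _ => by rw [le_antisymm (hz ▸ hcz j) (hc0 j)]; ring)
    (by linarith) hup
  on_goal 1 => refine ⟨(0, [1, 1, 1]), by simp, h.1, ?_⟩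
  on_goal 2 => refine ⟨(1, [1, 1, 1, 1]), by simp, h.1, ?_⟩
  on_goal 3 => refine ⟨(1, [2]), by simp, h.1, ?_⟩
  on_goal 4 => refine ⟨(2, [2, 1, 1, 1]), by simp, h.1, ?_⟩
  on_goal 5 => refine ⟨(3, [2, 2, 2]), by simp, h.1, ?_⟩
  all_goals
    obtain ⟨-, h0, h1, h2, hT⟩ := h
    refine Fin.addCases (fun i => by fin_cases i <;> simpa) (fun j => ?_)
    rw [show b (Fin.natAdd 3 j) = c j from rfl,
      Int.eq_ite_of_antitone_of_sum_sq_le_one hc hc0 (by omega) j, hT]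
    rcases j with ⟨_ | j, hj⟩
    · simp
    · rw [if_neg (by push_cast; omega), List.getD_eq_default _ _
        (by simp only [List.length_cons, List.length_nil, Fin.val_natAdd]; omega)]
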